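/- For a two-valued tautology A, glb(∅,A)=0.5: every fuzzy interpretation gives A value ≥ 0.5, and some fuzzy interpretation gives A value exactly 0.5. -/
import Mathlib


/-- Propositional formulas built from letters with ∧, ∨, ¬. -/
inductive PForm (α : Type) : Type
  | letter : α → PForm α
  | and : PForm α → PForm α → PForm α
  | or : PForm α → PForm α → PForm α
  | neg : PForm α → PForm α

/-- Fuzzy evaluation: min for ∧, max for ∨, 1−x for ¬. -/
def feval {α : Type} (I : α → ℝ) : PForm α → ℝ
  | .letter p => I p
  | .and A B => min (feval I A) (feval I B)
  | .or A B => max (feval I A) (feval I B)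
  | .neg A => 1 - feval I A

/-- A fuzzy interpretation maps letters into [0,1]. -/
def IsFuzzy {α : Type} (I : α → ℝ) : Prop := ∀ p, I p ∈ Set.Icc (0:ℝ) 1

/-- Two-valued interpretations are the {0,1}-valued fuzzy interpretations. -/
def IsTwoValued {α : Type} (I : α → ℝ) : Prop := ∀ p, I p = 0 ∨ I p = 1

lemma feval_half {α : Type} (B : PForm α) : feval (fun _ => (1:ℝ)/2) B = 1/2 := by
  induction B with
  | letter p => rfl
  | and A B ihA ihB => rw [feval, ihA, ihB, min_self]
  | or A B ihA ihB => rw [feval, ihA, ihB, max_self]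
  | neg A ih => rw [feval, ih]; norm_num

lemma feval_two {α : Type} (J : α → ℝ) (hJ : IsTwoValued J) (B : PForm α) :
    feval J B = 0 ∨ feval J B = 1 := by
  induction B with
  | letter p => exact hJ p
  | and A B ihA ihB => rcases ihA with h|h <;> rcases ihB with h2|h2 <;>
      simp [feval, h, h2]
  | or A B ihA ihB => rcases ihA with h|h <;> rcases ihB with h2|h2 <;>
      simp [feval, h, h2]
  | neg A ih => rcases ih with h|h <;> simp [feval, h]

lemma round_lemma {α : Type} (I : α → ℝ) (B : PForm α) :
    (feval I B < 1/2 → feval (fun p => if (1:ℝ)/2 ≤ I p then 1 else 0) B = 0) ∧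
    (1/2 < feval I B → feval (fun p => if (1:ℝ)/2 ≤ I p then 1 else 0) B = 1) := by
  induction B with
  | letter p =>
    constructor <;> intro h <;> simp only [feval] at h ⊢ <;>
      [rw [if_neg (by linarith)]; rw [if_pos (by linarith)]]
  | and A B ihA ihB =>
    have hJA := feval_two (fun p => if (1:ℝ)/2 ≤ I p then 1 else 0)
      (fun p => by dsimp; split <;> simp) A
    have hJB := feval_two (fun p => if (1:ℝ)/2 ≤ I p then 1 else 0)
      (fun p => by dsimp; split <;> simp) B
    constructor <;> intro h <;> simp only [feval] at h ⊢
    · rcases min_lt_iff.mp h with hc | hc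
      · rw [ihA.1 hc]; rcases hJB with h2 | h2 <;> rw [h2] <;> norm_num
      · rw [ihB.1 hc]; rcases hJA with h2 | h2 <;> rw [h2] <;> norm_num
    · rw [lt_min_iff] at h; rw [ihA.2 h.1, ihB.2 h.2]; norm_num
  | or A B ihA ihB =>
    constructor <;> intro h <;> simp only [feval] at h ⊢
    · rw [max_lt_iff] at h; rw [ihA.1 h.1, ihB.1 h.2]; norm_num
    · rcases lt_max_iff.mp h with hc | hc
      · rw [ihA.2 hc]
        rcases feval_two (fun p => if (1:ℝ)/2 ≤ I p then 1 else 0)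
          (fun p => by dsimp; split <;> simp) B with h2|h2 <;> rw [h2] <;> norm_num
      · rw [ihB.2 hc]
        rcases feval_two (fun p => if (1:ℝ)/2 ≤ I p then 1 else 0)
          (fun p => by dsimp; split <;> simp) A with h2|h2 <;> rw [h2] <;> norm_num
  | neg A ih =>
    constructor <;> intro h <;> simp only [feval] at h ⊢
    · rw [ih.2 (by linarith)]; norm_num
    · rw [ih.1 (by linarith)]; norm_num

/-- for a two-valued tautology A, glb(∅,A) = 0.5: every fuzzy
interpretation gives A value ≥ 0.5, and some fuzzy interpretation gives A
value exactly 0.5. -/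
theorem glb_of_tautology {α : Type} (A : PForm α)
    (htaut : ∀ I : α → ℝ, IsTwoValued I → feval I A = 1) :
    (∀ I : α → ℝ, IsFuzzy I → 1/2 ≤ feval I A) ∧
    (∃ I : α → ℝ, IsFuzzy I ∧ feval I A = 1/2) := by
  constructor
  · intro I _
    by_contra h
    push_neg at h
    have h0 := (round_lemma I A).1 h
    have h1 := htaut (fun p => if (1:ℝ)/2 ≤ I p then 1 else 0)
      (fun p => by dsimp; split <;> simp)
    rw [h1] at h0; norm_num at h0
  · exact ⟨fun _ => 1/2, fun p => by norm_num, feval_half A⟩
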